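/- arXiv:2408.12283 — 2 statements merged into one kernel-verified Lean document; each statement's English description precedes it below -/
import Mathlib

section
/- Let E be a finite-dimensional real inner product space and W : E → ℝ twice continuously differentiable with constants 0 < γ ≤ L such that γ‖ξ‖² ≤ D²W(x)[ξ, ξ] ≤ L‖ξ‖² for all x, ξ ∈ E. Let a* be the unique global minimizer of W, let a ∈ E, let δ be the Newton direction at a, let σ ∈ (0, 1/2), and suppose τ ∈ (0, 1] satisfies the Armijo condition W(a + τδ) ≤ W(a) + στ⟨∇W(a), δ⟩. Then W(a + τδ) − W(a*) ≤ (1 − 2στγ²/L²)(W(a) − W(a*)). -/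
open scoped RealInnerProductSpace

/-!
Write `g = ∇W(a)` and `B = D²W(a)`, so that `Bδ = -g`. Strong convexity along segments gives
the Polyak–Łojasiewicz inequality `2γ (W(a) - W(a*)) ≤ ‖g‖²`, and expanding
`0 ≤ B(Lδ + g, Lδ + g)` with `B(g, g) ≤ L‖g‖²` gives `‖g‖² ≤ L B(δ, δ) = -L⟨g, δ⟩`.
Hence `-⟨g, δ⟩ ≥ (2γ/L)(W(a) - W(a*)) ≥ (2γ²/L²)(W(a) - W(a*))`, and the Armijo condition
turns this decrease of the linear model into the claimed contraction.
-/

theorem add_deriv_add_half_le_of_le_deriv2 {f f' f'' : ℝ → ℝ} {c : ℝ}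
    (hf : ∀ t, HasDerivAt f (f' t) t) (hf' : ∀ t, HasDerivAt f' (f'' t) t)
    (hc : ∀ t, c ≤ f'' t) :
    f 0 + f' 0 + c / 2 ≤ f 1 := by
  have hmono : Monotone fun t => f' t - c * t :=
    monotone_of_hasDerivAt_nonneg (f' := fun t => f'' t - c)
      (fun t => ((hf' t).sub ((hasDerivAt_id' t).const_mul c)).congr_deriv (by ring))
      fun t => sub_nonneg.2 (hc t)
  have hh : ∀ t, HasDerivAt (fun s => f s - c / 2 * s ^ 2) (f' t - c * t) t := fun t =>
    ((hf t).sub ((hasDerivAt_pow 2 t).const_mul (c / 2))).congr_deriv (by norm_num; ring)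
  obtain ⟨ξ, hξ, hslope⟩ := exists_hasDerivAt_eq_slope _ _ zero_lt_one
    (fun t _ => (hh t).continuousAt.continuousWithinAt) fun t _ => hh t
  have := hmono hξ.1.le
  simp only [mul_zero, sub_zero, div_one] at this hslope
  linarith

section

variable {E : Type*} [NormedAddCommGroup E] [InnerProductSpace ℝ E]

theorem add_fderiv_add_le_of_le_iteratedFDeriv_two {W : E → ℝ} {γ : ℝ} (hW : ContDiff ℝ 2 W)
    (hlow : ∀ x ξ : E, γ * ‖ξ‖ ^ 2 ≤ iteratedFDeriv ℝ 2 W x ![ξ, ξ]) (x v : E) :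
    W x + fderiv ℝ W x v + γ / 2 * ‖v‖ ^ 2 ≤ W (x + v) := by
  have hW' : Differentiable ℝ (fderiv ℝ W) :=
    (hW.fderiv_right (m := 1) le_rfl).differentiable one_ne_zero
  have hline : ∀ t : ℝ, HasDerivAt (fun s : ℝ => x + s • v) v t := fun t => by
    simpa using ((hasDerivAt_id t).smul_const v).const_add x
  have := add_deriv_add_half_le_of_le_deriv2 (c := γ * ‖v‖ ^ 2)
    (f := fun t => W (x + t • v)) (f' := fun t => fderiv ℝ W (x + t • v) v)
    (f'' := fun t => iteratedFDeriv ℝ 2 W (x + t • v) ![v, v])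
    (fun t => ((hW.differentiable two_ne_zero _).hasFDerivAt.comp_hasDerivAt t (hline t)))
    (fun t => by
      simpa [iteratedFDeriv_two_apply] using
        ((hW' _).hasFDerivAt.comp_hasDerivAt t (hline t)).clm_apply (hasDerivAt_const t v))
    fun t => hlow _ v
  simp only [zero_smul, add_zero, one_smul] at this
  linarith

theorem two_mul_sub_le_norm_gradient_sq [CompleteSpace E] {W : E → ℝ} {γ : ℝ} (hγ : 0 < γ)
    (hW : ContDiff ℝ 2 W)
    (hlow : ∀ x ξ : E, γ * ‖ξ‖ ^ 2 ≤ iteratedFDeriv ℝ 2 W x ![ξ, ξ]) (x y : E) :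
    2 * γ * (W x - W y) ≤ ‖gradient W x‖ ^ 2 := by
  have htaylor := add_fderiv_add_le_of_le_iteratedFDeriv_two hW hlow x (y - x)
  rw [add_sub_cancel, ← toDual_gradient, InnerProductSpace.toDual_apply_apply] at htaylor
  have hsq : 0 ≤ ‖gradient W x + γ • (y - x)‖ ^ 2 := sq_nonneg _
  rw [norm_add_sq_real, real_inner_smul_right, norm_smul, Real.norm_eq_abs, abs_of_pos hγ,
    mul_pow] at hsq
  nlinarith [mul_le_mul_of_nonneg_left htaylor hγ.le]

theorem norm_sq_le_mul_apply_self {B : E →L[ℝ] E →L[ℝ] ℝ} (hsymm : ∀ v w, B v w = B w v)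
    (hpos : ∀ v, 0 ≤ B v v) {L : ℝ} (hL : 0 < L) {g δ : E} (hup : B g g ≤ L * ‖g‖ ^ 2)
    (hδ : B δ g = -‖g‖ ^ 2) :
    ‖g‖ ^ 2 ≤ L * B δ δ := by
  have hexpand : B (L • δ + g) (L • δ + g) = L ^ 2 * B δ δ + 2 * L * B δ g + B g g := by
    simp only [map_add, map_smul, add_apply, FunLike.coe_smul,
      Pi.smul_apply, smul_eq_mul, hsymm g δ]
    ring
  have := hpos (L • δ + g)
  nlinarith

theorem le_neg_inner_gradient_newton_direction [CompleteSpace E] {W : E → ℝ} {γ L : ℝ}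
    (hγ : 0 < γ) (hγL : γ ≤ L) (hW : ContDiff ℝ 2 W)
    (hlow : ∀ x ξ : E, γ * ‖ξ‖ ^ 2 ≤ iteratedFDeriv ℝ 2 W x ![ξ, ξ]) {a δ : E}
    (hup : ∀ ξ : E, iteratedFDeriv ℝ 2 W a ![ξ, ξ] ≤ L * ‖ξ‖ ^ 2)
    (hδ : ∀ v : E, iteratedFDeriv ℝ 2 W a ![δ, v] = -⟪gradient W a, v⟫) (y : E) :
    2 * (γ / L) * (W a - W y) ≤ -⟪gradient W a, δ⟫ := by
  set g := gradient W a
  set B := fderiv ℝ (fderiv ℝ W) a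
  have hB : ∀ v w, iteratedFDeriv ℝ 2 W a ![v, w] = B v w := fun v w => by
    simp [iteratedFDeriv_two_apply, B]
  have hsymm : ∀ v w, B v w = B w v := hW.contDiffAt.isSymmSndFDerivAt (by simp)
  have hL : 0 < L := hγ.trans_le hγL
  have hdec : ‖g‖ ^ 2 ≤ L * B δ δ :=
    norm_sq_le_mul_apply_self hsymm
      (fun v => (hB v v ▸ hlow a v : γ * ‖v‖ ^ 2 ≤ B v v).trans' (by positivity)) hL
      (hB g g ▸ hup g) (by rw [← hB, hδ, real_inner_self_eq_norm_sq])
  have hPL := two_mul_sub_le_norm_gradient_sq hγ hW hlow a y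
  rw [← hB, hδ] at hdec
  rw [mul_div_assoc', div_mul_eq_mul_div, div_le_iff₀ hL]
  linarith

end

theorem stmt_10_general {E : Type*} [NormedAddCommGroup E] [InnerProductSpace ℝ E]
    [FiniteDimensional ℝ E]
    (W : E → ℝ) (γ L : ℝ) (hγ : 0 < γ) (hγL : γ ≤ L)
    (hW : ContDiff ℝ 2 W)
    (hlow : ∀ x ξ : E, γ * ‖ξ‖ ^ 2 ≤ iteratedFDeriv ℝ 2 W x ![ξ, ξ])
    (hup : ∀ x ξ : E, iteratedFDeriv ℝ 2 W x ![ξ, ξ] ≤ L * ‖ξ‖ ^ 2)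
    (astar : E) (hmin : ∀ x : E, W astar ≤ W x)
    (a δ : E)
    (hδ : ∀ v : E, iteratedFDeriv ℝ 2 W a ![δ, v] = -⟪gradient W a, v⟫)
    (σ : ℝ) (hσ0 : 0 < σ)
    (τ : ℝ) (hτ0 : 0 < τ)
    (harmijo : W (a + τ • δ) ≤ W a + σ * τ * ⟪gradient W a, δ⟫) :
    W (a + τ • δ) - W astar ≤ (1 - 2 * σ * τ * γ ^ 2 / L ^ 2) * (W a - W astar) := by
  have hdec := le_neg_inner_gradient_newton_direction hγ hγL hW hlow (hup a) hδ astar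
  have hgap : 0 ≤ W a - W astar := sub_nonneg.2 (hmin a)
  have hL : 0 < L := hγ.trans_le hγL
  have hratio : γ ^ 2 / L ^ 2 ≤ γ / L := by
    rw [← div_pow, sq]
    exact mul_le_of_le_one_right (by positivity) ((div_le_one hL).2 hγL)
  calc W (a + τ • δ) - W astar ≤ (W a - W astar) - σ * τ * -⟪gradient W a, δ⟫ := by linarith
    _ ≤ (W a - W astar) - σ * τ * (2 * (γ / L) * (W a - W astar)) := by gcongr
    _ ≤ (W a - W astar) - σ * τ * (2 * (γ ^ 2 / L ^ 2) * (W a - W astar)) := by gcongr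
    _ = (1 - 2 * σ * τ * γ ^ 2 / L ^ 2) * (W a - W astar) := by ring

/-- One step of the damped Newton method with an Armijo step size contracts the energy
distance to the minimum by the factor `1 - 2στγ²/L²`. -/
theorem stmt_10 {E : Type*} [NormedAddCommGroup E] [InnerProductSpace ℝ E]
    [FiniteDimensional ℝ E]
    (W : E → ℝ) (γ L : ℝ) (hγ : 0 < γ) (hγL : γ ≤ L)
    (hW : ContDiff ℝ 2 W)
    (hlow : ∀ x ξ : E, γ * ‖ξ‖ ^ 2 ≤ iteratedFDeriv ℝ 2 W x ![ξ, ξ])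
    (hup : ∀ x ξ : E, iteratedFDeriv ℝ 2 W x ![ξ, ξ] ≤ L * ‖ξ‖ ^ 2)
    (astar : E) (hmin : ∀ x : E, W astar ≤ W x)
    (a δ : E)
    (hδ : ∀ v : E, iteratedFDeriv ℝ 2 W a ![δ, v] = -⟪gradient W a, v⟫)
    (σ : ℝ) (hσ0 : 0 < σ) (hσ1 : σ < 1 / 2)
    (τ : ℝ) (hτ0 : 0 < τ) (hτ1 : τ ≤ 1)
    (harmijo : W (a + τ • δ) ≤ W a + σ * τ * ⟪gradient W a, δ⟫) :
    W (a + τ • δ) - W astar ≤ (1 - 2 * σ * τ * γ ^ 2 / L ^ 2) * (W a - W astar) :=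
  stmt_10_general W γ L hγ hγL hW hlow hup astar hmin a δ hδ σ hσ0 τ hτ0 harmijo
end

section
/- Let E be a finite-dimensional real inner product space and W : E → ℝ twice continuously differentiable with constants 0 < γ ≤ L such that γ‖ξ‖² ≤ D²W(x)[ξ, ξ] ≤ L‖ξ‖² for all x, ξ ∈ E. Let a* be the unique global minimizer of W. Fix 0 < ρ ≤ 1/2 and 0 < σ < 1/2, and define a sequence (aⁿ) by: a⁰ ∈ E given; if the Newton direction δⁿ at aⁿ is zero set aⁿ⁺¹ = aⁿ, otherwise aⁿ⁺¹ = aⁿ + τⁿδⁿ where τⁿ is the backtracking step size. Then: (i) if the Newton direction δⁿ at aⁿ vanishes for some n, then aⁿ = a*; (ii) for all n ≥ 0, ‖aⁿ − a*‖² ≤ (L/γ) qⁿ ‖a⁰ − a*‖², with q = 1 − 4ρσ(1 − σ)γ³/L³ < 1. In particular the iterates converge r-linearly to a* at a rate independent of everything except γ, L, ρ, σ. -/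
/-!
Restricted to a line, the Hessian bounds give the quadratic models
`W x + ⟪∇W x, v⟫ + γ/2 ‖v‖² ≤ W (x + v) ≤ W x + ⟪∇W x, v⟫ + L/2 ‖v‖²`.
The lower model yields the Polyak–Łojasiewicz inequality `2γ (W x - W a*) ≤ ‖∇W x‖²`;
the upper one shows that every step `t ≤ 2(1-σ)γ/L` passes the Armijo test, so
backtracking returns `τ ≥ 2ρ(1-σ)γ/L`. Along a Newton direction `⟪∇W, δ⟫ = -D²W[δ, δ]`,
and Cauchy–Schwarz for the symmetric form `D²W` gives `‖∇W‖² ≤ L D²W[δ, δ]`. Hence one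
step multiplies `W - W a*` by at most `1 - 4ρσ(1-σ)γ²/L² ≤ q`, and the quadratic models
turn this into the bound on `‖aⁿ - a*‖²`.
-/

open scoped RealInnerProductSpace

theorem add_deriv_add_half_le_of_le_deriv2_s12 {g g' g'' : ℝ → ℝ} {m : ℝ}
    (hg : ∀ t, HasDerivAt g (g' t) t) (hg' : ∀ t, HasDerivAt g' (g'' t) t)
    (hm : ∀ t, m ≤ g'' t) : g 0 + g' 0 + m / 2 ≤ g 1 := by
  have hderiv : ∀ t, HasDerivAt (fun t ↦ g t - m / 2 * t ^ 2) (g' t - m * t) t := fun t ↦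
    ((hg t).sub ((hasDerivAt_pow 2 t).const_mul (m / 2))).congr_deriv (by ring)
  have hconv : ConvexOn ℝ Set.univ (fun t ↦ g t - m / 2 * t ^ 2) := by
    refine convexOn_of_hasDerivWithinAt2_nonneg (f' := fun t ↦ g' t - m * t)
      (f'' := fun t ↦ g'' t - m) convex_univ
      (fun t _ ↦ (hderiv t).continuousAt.continuousWithinAt) ?_ ?_ fun t _ ↦ sub_nonneg.2 (hm t)
    · exact fun t _ ↦ (hderiv t).hasDerivWithinAt
    · exact fun t _ ↦
        ((hg' t).sub ((hasDerivAt_id t).const_mul m)).hasDerivWithinAt.congr_deriv (by simp)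
  have hslope := hconv.le_slope_of_hasDerivAt (Set.mem_univ 0) (Set.mem_univ 1) one_pos
    (hderiv 0)
  simp only [slope_def_field, mul_zero, sub_zero, div_one, one_pow, mul_one,
    ne_eq, OfNat.ofNat_ne_zero, not_false_eq_true, zero_pow] at hslope
  linarith

theorem le_add_deriv_add_half_of_deriv2_le {g g' g'' : ℝ → ℝ} {M : ℝ}
    (hg : ∀ t, HasDerivAt g (g' t) t) (hg' : ∀ t, HasDerivAt g' (g'' t) t)
    (hM : ∀ t, g'' t ≤ M) : g 1 ≤ g 0 + g' 0 + M / 2 := by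
  have := add_deriv_add_half_le_of_le_deriv2_s12 (fun t ↦ (hg t).neg) (fun t ↦ (hg' t).neg)
    (m := -M) fun t ↦ neg_le_neg (hM t)
  simp only [Pi.neg_apply] at this
  linarith

theorem mul_le_of_isGreatest_pow {ρ c τ : ℝ} {P : ℝ → Prop} (hρ0 : 0 < ρ) (hρ1 : ρ < 1)
    (hc : 0 < c) (hρc : ρ * c ≤ 1) (hP : ∀ t, 0 < t → t ≤ c → P t)
    (hτ : IsGreatest {t | ∃ k : ℕ, t = ρ ^ k ∧ P t} τ) : ρ * c ≤ τ := by
  obtain ⟨n, hlt, hle⟩ := exists_nat_pow_near_of_lt_one (mul_pos hρ0 hc) hρc hρ0 hρ1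
  have hn : ρ ^ n ≤ c := by
    rw [pow_succ'] at hlt
    exact (lt_of_mul_lt_mul_left hlt hρ0.le).le
  exact hle.trans (hτ.2 ⟨n, rfl, hP _ (pow_pos hρ0 n) hn⟩)

theorem one_sub_mul_div_pow_three_mem_Ico {c γ L : ℝ} (hc0 : 0 < c) (hc1 : c ≤ 1)
    (hγ : 0 < γ) (hγL : γ ≤ L) : 1 - c * γ ^ 3 / L ^ 3 ∈ Set.Ico 0 1 := by
  have hL := hγ.trans_le hγL
  have hr : 0 < (γ / L) ^ 3 ∧ (γ / L) ^ 3 ≤ 1 :=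
    ⟨by positivity, pow_le_one₀ (by positivity) ((div_le_one hL).2 hγL)⟩
  rw [mul_div_assoc, ← div_pow]
  exact ⟨sub_nonneg.2 (mul_le_one₀ hc1 hr.1.le hr.2), sub_lt_self _ (mul_pos hc0 hr.1)⟩

theorem one_sub_mul_div_sq_le {c γ L : ℝ} (hc : 0 ≤ c) (hγ : 0 < γ) (hγL : γ ≤ L) :
    1 - c * γ ^ 2 / L ^ 2 ≤ 1 - c * γ ^ 3 / L ^ 3 := by
  have hL := hγ.trans_le hγL
  rw [mul_div_assoc, mul_div_assoc, ← div_pow, ← div_pow]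
  exact sub_le_sub_left (mul_le_mul_of_nonneg_left (pow_le_pow_of_le_one (by positivity)
    ((div_le_one hL).2 hγL) (by norm_num)) hc) 1

section

variable {E F : Type*} [NormedAddCommGroup E] [InnerProductSpace ℝ E]
  [NormedAddCommGroup F] [NormedSpace ℝ F]

theorem hasDerivAt_apply_add_smul {f : E → F} (hf : Differentiable ℝ f) (x v : E) (t : ℝ) :
    HasDerivAt (fun s : ℝ ↦ f (x + s • v)) (fderiv ℝ f (x + t • v) v) t := by
  have hline : HasDerivAt (fun s : ℝ ↦ x + s • v) v t := by
    simpa using ((hasDerivAt_id t).smul_const v).const_add x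
  exact (hf _).hasFDerivAt.comp_hasDerivAt t hline

variable {f : E → ℝ}

theorem hasDerivAt_fderiv_apply_add_smul (hf : ContDiff ℝ 2 f) (x v : E) (t : ℝ) :
    HasDerivAt (fun s : ℝ ↦ fderiv ℝ f (x + s • v) v)
      (iteratedFDeriv ℝ 2 f (x + t • v) ![v, v]) t := by
  have hf' : Differentiable ℝ (fderiv ℝ f) :=
    (hf.fderiv_right le_rfl).differentiable one_ne_zero
  simpa [iteratedFDeriv_two_apply] using
    (hasDerivAt_apply_add_smul hf' x v t).clm_apply (hasDerivAt_const t v)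

variable [CompleteSpace E]

theorem le_apply_add_of_le_iteratedFDeriv_two (hf : ContDiff ℝ 2 f) {c : ℝ}
    (hc : ∀ y ξ, c * ‖ξ‖ ^ 2 ≤ iteratedFDeriv ℝ 2 f y ![ξ, ξ]) (x v : E) :
    f x + ⟪gradient f x, v⟫ + c / 2 * ‖v‖ ^ 2 ≤ f (x + v) := by
  simpa [div_mul_eq_mul_div] using add_deriv_add_half_le_of_le_deriv2_s12
    (hasDerivAt_apply_add_smul (hf.differentiable two_ne_zero) x v)
    (hasDerivAt_fderiv_apply_add_smul hf x v) fun t ↦ hc (x + t • v) v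

theorem apply_add_le_of_iteratedFDeriv_two_le (hf : ContDiff ℝ 2 f) {c : ℝ}
    (hc : ∀ y ξ, iteratedFDeriv ℝ 2 f y ![ξ, ξ] ≤ c * ‖ξ‖ ^ 2) (x v : E) :
    f (x + v) ≤ f x + ⟪gradient f x, v⟫ + c / 2 * ‖v‖ ^ 2 := by
  simpa [div_mul_eq_mul_div] using le_add_deriv_add_half_of_deriv2_le
    (hasDerivAt_apply_add_smul (hf.differentiable two_ne_zero) x v)
    (hasDerivAt_fderiv_apply_add_smul hf x v) fun t ↦ hc (x + t • v) v

theorem two_mul_sub_le_norm_gradient_sq_s12 {γ : ℝ} (hγ : 0 < γ) {x : E}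
    (hlb : ∀ v, f x + ⟪gradient f x, v⟫ + γ / 2 * ‖v‖ ^ 2 ≤ f (x + v)) (y : E) :
    2 * γ * (f x - f y) ≤ ‖gradient f x‖ ^ 2 := by
  have h := hlb (y - x)
  rw [add_sub_cancel] at h
  have hcs := neg_le_of_abs_le (abs_real_inner_le_norm (gradient f x) (y - x))
  nlinarith [sq_nonneg (γ * ‖y - x‖ - ‖gradient f x‖)]

theorem eq_of_gradient_eq_zero {γ : ℝ} (hγ : 0 < γ) {x y : E}
    (hlb : ∀ v, f x + ⟪gradient f x, v⟫ + γ / 2 * ‖v‖ ^ 2 ≤ f (x + v))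
    (hx : gradient f x = 0) (hy : f y ≤ f x) : x = y := by
  have h := hlb (y - x)
  rw [hx, inner_zero_left, add_sub_cancel] at h
  have : ‖y - x‖ ^ 2 ≤ 0 := by nlinarith
  simpa [sub_eq_zero, eq_comm] using this

theorem sq_norm_sub_le_of_sub_le (hf : ContDiff ℝ 2 f) {γ L s : ℝ} (hγ : 0 < γ)
    (hlow : ∀ y ξ, γ * ‖ξ‖ ^ 2 ≤ iteratedFDeriv ℝ 2 f y ![ξ, ξ])
    (hup : ∀ y ξ, iteratedFDeriv ℝ 2 f y ![ξ, ξ] ≤ L * ‖ξ‖ ^ 2) {x₀ : E}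
    (hx₀ : gradient f x₀ = 0) {x y : E} (hs : 0 ≤ s) (h : f x - f x₀ ≤ s * (f y - f x₀)) :
    ‖x - x₀‖ ^ 2 ≤ L / γ * s * ‖y - x₀‖ ^ 2 := by
  have hx := le_apply_add_of_le_iteratedFDeriv_two hf hlow x₀ (x - x₀)
  have hy := apply_add_le_of_iteratedFDeriv_two_le hf hup x₀ (y - x₀)
  simp only [hx₀, inner_zero_left, add_zero, add_sub_cancel] at hx hy
  rw [div_mul_eq_mul_div, div_mul_eq_mul_div, le_div_iff₀ hγ]
  nlinarith [mul_le_mul_of_nonneg_left hy hs]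

def IsNewtonDirection (f : E → ℝ) (x d : E) : Prop :=
  ∀ v, iteratedFDeriv ℝ 2 f x ![d, v] = -⟪gradient f x, v⟫

namespace IsNewtonDirection

variable {x d : E}

theorem gradient_eq_zero (h : IsNewtonDirection f x 0) : gradient f x = 0 := by
  have := h (gradient f x)
  rwa [ContinuousMultilinearMap.map_coord_zero _ 0 rfl, eq_comm, neg_eq_zero,
    inner_self_eq_zero] at this

theorem inner_gradient (h : IsNewtonDirection f x d) :
    ⟪gradient f x, d⟫ = -iteratedFDeriv ℝ 2 f x ![d, d] := by
  rw [h d, neg_neg]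

theorem norm_gradient_sq_le (hf : ContDiff ℝ 2 f) (h : IsNewtonDirection f x d) {L : ℝ}
    (hL : 0 ≤ L) (hnonneg : ∀ ξ, 0 ≤ iteratedFDeriv ℝ 2 f x ![ξ, ξ])
    (hup : ∀ ξ, iteratedFDeriv ℝ 2 f x ![ξ, ξ] ≤ L * ‖ξ‖ ^ 2) :
    ‖gradient f x‖ ^ 2 ≤ L * iteratedFDeriv ℝ 2 f x ![d, d] := by
  set g := gradient f x
  set B := (fderiv ℝ (fderiv ℝ f) x).toLinearMap₁₂
  have hB : ∀ v w, B v w = iteratedFDeriv ℝ 2 f x ![v, w] := by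
    simp [B, iteratedFDeriv_two_apply]
  have hBdg : B d g = -‖g‖ ^ 2 := by rw [hB, h g, real_inner_self_eq_norm_sq]
  have hBgd : B g d = B d g := (hf.contDiffAt.isSymmSndFDerivAt (by simp)) g d
  have hcs := LinearMap.BilinForm.apply_mul_apply_le_of_forall_zero_le B
    (fun ξ ↦ hB ξ ξ ▸ hnonneg ξ) d g
  rw [hBgd, hBdg, hB, hB] at hcs
  rcases (sq_nonneg ‖g‖).eq_or_lt with hg | hg
  · exact hg ▸ mul_nonneg hL (hnonneg d)
  · nlinarith [hup g, hnonneg d]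

theorem armijo_of_le (h : IsNewtonDirection f x d) {γ L σ t : ℝ} (hL : 0 < L) (hσ : σ ≤ 1)
    (hub : ∀ v, f (x + v) ≤ f x + ⟪gradient f x, v⟫ + L / 2 * ‖v‖ ^ 2)
    (hlow : γ * ‖d‖ ^ 2 ≤ iteratedFDeriv ℝ 2 f x ![d, d])
    (ht0 : 0 < t) (ht : t ≤ 2 * (1 - σ) * γ / L) :
    f (x + t • d) ≤ f x + σ * t * ⟪gradient f x, d⟫ := by
  have hstep := hub (t • d)
  rw [real_inner_smul_right, norm_smul, mul_pow, Real.norm_eq_abs, sq_abs] at hstep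
  have hdesc : ⟪gradient f x, d⟫ ≤ -(γ * ‖d‖ ^ 2) := by linarith [h.inner_gradient]
  rw [le_div_iff₀ hL] at ht
  nlinarith [mul_le_mul_of_nonneg_left hdesc (by positivity : 0 ≤ (1 - σ) * t),
    mul_le_mul_of_nonneg_right ht (by positivity : 0 ≤ t * ‖d‖ ^ 2)]

theorem sub_le_mul_sub (hf : ContDiff ℝ 2 f) (h : IsNewtonDirection f x d) {γ L ρ σ τ : ℝ}
    (hγ : 0 < γ) (hγL : γ ≤ L)
    (hlow : ∀ y ξ, γ * ‖ξ‖ ^ 2 ≤ iteratedFDeriv ℝ 2 f y ![ξ, ξ])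
    (hup : ∀ y ξ, iteratedFDeriv ℝ 2 f y ![ξ, ξ] ≤ L * ‖ξ‖ ^ 2)
    (hρ0 : 0 < ρ) (hρ1 : ρ ≤ 1 / 2) (hσ0 : 0 < σ) (hσ1 : σ < 1)
    (hτ : IsGreatest {t : ℝ | ∃ k : ℕ, t = ρ ^ k ∧
      f (x + t • d) ≤ f x + σ * t * ⟪gradient f x, d⟫} τ) (y : E) :
    f (x + τ • d) - f y ≤ (1 - 4 * ρ * σ * (1 - σ) * γ ^ 2 / L ^ 2) * (f x - f y) := by
  have hL : 0 < L := hγ.trans_le hγL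
  have hσ' : 0 < 1 - σ := by linarith
  have hnonneg : ∀ ξ, 0 ≤ iteratedFDeriv ℝ 2 f x ![ξ, ξ] := fun ξ ↦
    (mul_nonneg hγ.le (sq_nonneg _)).trans (hlow x ξ)
  set B := iteratedFDeriv ℝ 2 f x ![d, d]
  have hc : 2 * (1 - σ) * γ / L ≤ 2 := by
    rw [div_le_iff₀ hL]
    nlinarith
  have hτ_ge : ρ * (2 * (1 - σ) * γ / L) ≤ τ :=
    mul_le_of_isGreatest_pow hρ0 (by linarith) (by positivity) (by nlinarith)
      (fun t ht0 ht ↦ h.armijo_of_le hL hσ1.le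
        (apply_add_le_of_iteratedFDeriv_two_le hf hup x) (hlow x d) ht0 ht) hτ
  have hdec : f (x + τ • d) ≤ f x - σ * τ * B := by
    obtain ⟨_, _, harmijo⟩ := hτ.1
    rw [h.inner_gradient] at harmijo
    linarith
  have hgrad : 2 * γ * (f x - f y) / L ≤ B := by
    rw [div_le_iff₀' hL]
    exact (two_mul_sub_le_norm_gradient_sq_s12 hγ (le_apply_add_of_le_iteratedFDeriv_two hf hlow x)
      y).trans (h.norm_gradient_sq_le hf hL.le hnonneg (hup x))
  have hprod : ρ * (2 * (1 - σ) * γ / L) * (2 * γ * (f x - f y) / L) ≤ τ * B :=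
    (mul_le_mul_of_nonneg_left hgrad (by positivity)).trans
      (mul_le_mul_of_nonneg_right hτ_ge (hnonneg d))
  calc f (x + τ • d) - f y ≤ f x - f y - σ * (τ * B) := by linarith
    _ ≤ f x - f y - σ * (ρ * (2 * (1 - σ) * γ / L) * (2 * γ * (f x - f y) / L)) := by gcongr
    _ = (1 - 4 * ρ * σ * (1 - σ) * γ ^ 2 / L ^ 2) * (f x - f y) := by field_simp; ring

end IsNewtonDirection

end

/-- Global r-linear convergence of the damped Newton iteration with Armijo backtracking:
if a Newton direction vanishes the iterate equals the minimizer, and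
`‖aⁿ - a*‖² ≤ (L/γ) qⁿ ‖a⁰ - a*‖²` with `q = 1 - 4ρσ(1-σ)γ³/L³ < 1`. -/
theorem stmt_12 {E : Type*} [NormedAddCommGroup E] [InnerProductSpace ℝ E]
    [FiniteDimensional ℝ E]
    (W : E → ℝ) (γ L : ℝ) (hγ : 0 < γ) (hγL : γ ≤ L)
    (hW : ContDiff ℝ 2 W)
    (hlow : ∀ x ξ : E, γ * ‖ξ‖ ^ 2 ≤ iteratedFDeriv ℝ 2 W x ![ξ, ξ])
    (hup : ∀ x ξ : E, iteratedFDeriv ℝ 2 W x ![ξ, ξ] ≤ L * ‖ξ‖ ^ 2)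
    (astar : E) (hmin : ∀ x : E, W astar ≤ W x)
    (ρ σ : ℝ) (hρ0 : 0 < ρ) (hρ1 : ρ ≤ 1 / 2) (hσ0 : 0 < σ) (hσ1 : σ < 1 / 2)
    (a : ℕ → E) (δ : ℕ → E) (τ : ℕ → ℝ)
    (hδ : ∀ n, ∀ v : E, iteratedFDeriv ℝ 2 W (a n) ![δ n, v] = -⟪gradient W (a n), v⟫)
    (hstep0 : ∀ n, δ n = 0 → a (n + 1) = a n)
    (hstep : ∀ n, δ n ≠ 0 →
      IsGreatest {t : ℝ | ∃ k : ℕ, t = ρ ^ k ∧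
        W (a n + t • δ n) ≤ W (a n) + σ * t * ⟪gradient W (a n), δ n⟫} (τ n) ∧
      a (n + 1) = a n + τ n • δ n) :
    (∀ n : ℕ, δ n = 0 → a n = astar) ∧
    1 - 4 * ρ * σ * (1 - σ) * γ ^ 3 / L ^ 3 < 1 ∧
    ∀ n : ℕ, ‖a n - astar‖ ^ 2 ≤
      L / γ * (1 - 4 * ρ * σ * (1 - σ) * γ ^ 3 / L ^ 3) ^ n * ‖a 0 - astar‖ ^ 2 := by
  have hgrad : gradient W astar = 0 := by
    simp [gradient, IsLocalMin.fderiv_eq_zero (Filter.Eventually.of_forall hmin)]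
  have hstationary : ∀ n, δ n = 0 → a n = astar := fun n h0 ↦
    eq_of_gradient_eq_zero hγ (le_apply_add_of_le_iteratedFDeriv_two hW hlow (a n))
      (h0 ▸ hδ n : IsNewtonDirection W (a n) 0).gradient_eq_zero (hmin _)
  have hc : 0 < 4 * ρ * σ * (1 - σ) ∧ 4 * ρ * σ * (1 - σ) ≤ 1 := by
    constructor <;> nlinarith [mul_pos hσ0 (by linarith : 0 < 1 - σ)]
  set q := 1 - 4 * ρ * σ * (1 - σ) * γ ^ 3 / L ^ 3
  obtain ⟨hq0, hq1⟩ : q ∈ Set.Ico 0 1 := one_sub_mul_div_pow_three_mem_Ico hc.1 hc.2 hγ hγL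
  have hcontract : ∀ n, W (a (n + 1)) - W astar ≤ q * (W (a n) - W astar) := by
    intro n
    by_cases h0 : δ n = 0
    · simp [hstep0 n h0, hstationary n h0]
    obtain ⟨hτ, hnext⟩ := hstep n h0
    rw [hnext]
    exact (IsNewtonDirection.sub_le_mul_sub hW (hδ n) hγ hγL hlow hup hρ0 hρ1 hσ0 (by linarith)
      hτ astar).trans (mul_le_mul_of_nonneg_right (one_sub_mul_div_sq_le hc.1.le hγ hγL)
        (sub_nonneg.2 (hmin (a n))))
  refine ⟨hstationary, hq1, fun n ↦ ?_⟩
  exact sq_norm_sub_le_of_sub_le hW hγ hlow hup hgrad (pow_nonneg hq0 n)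
    (le_geom (u := fun k ↦ W (a k) - W astar) hq0 n fun k _ ↦ hcontract k)
end
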